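/- For every rooted computation tree T (in which no node has exactly one child) and every integer n ≥ 0, the n-th potential of T in the rooted-tree steal model equals the n-th potential of its left-child right-sibling binary encoding in the binary-tree steal model: Φ_R(T, n) = Φ(LCRS(T), n). -/

import Mathlib

/-- A binary computation tree: a single node, or a root with two subtrees. -/
inductive BTree : Type
  | triv : BTree
  | node : BTree → BTree → BTree
  deriving DecidableEq

/-- A steal step on a multiset of binary computation trees: choose an arbitrary
tree `U` and a tree `node l r` from the multiset, and replace them by `l` and `r`. -/
def StealStep (S S' : Multiset BTree) : Prop :=
  ∃ (U l r : BTree) (S₀ : Multiset BTree),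
    S = U ::ₘ BTree.node l r ::ₘ S₀ ∧ S' = l ::ₘ r ::ₘ S₀

/-- `StealSeq n S` means there exists a sequence of `n` steal steps starting from `S`. -/
def StealSeq : ℕ → Multiset BTree → Prop
  | 0, _ => True
  | n + 1, S => ∃ S', StealStep S S' ∧ StealSeq n S'

/-- The maximum length of a sequence of steal steps starting from `S`. -/
noncomputable def steals (S : Multiset BTree) : ℕ :=
  sSup {n | StealSeq n S}

/-- The `n`-th potential of `T`: the maximum number of steals starting from a
configuration with one processor owning `T` and `n` processors with trivial trees. -/
noncomputable def Phi (T : BTree) (n : ℕ) : ℕ :=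
  steals (T ::ₘ Multiset.replicate n BTree.triv)



/-- A rooted tree: a root with a finite ordered list of children. -/
inductive RTree : Type
  | node : List RTree → RTree

/-- A rooted computation tree: no node has exactly one child. -/
inductive RTree.Valid : RTree → Prop
  | mk (cs : List RTree) (hlen : cs.length ≠ 1) (hc : ∀ c ∈ cs, RTree.Valid c) :
      RTree.Valid (RTree.node cs)

/-- A steal step on a multiset of rooted computation trees: choose an arbitrary tree `U`
and a tree whose root has children `cs ++ [c]` (at least two children); the stolen subtree
is the last child `c`, and the remainder is the root with the other children if there were
more than two, or the single other child if there were exactly two. -/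
def RStealStep (S S' : Multiset RTree) : Prop :=
  ∃ (U c : RTree) (cs : List RTree) (S₀ : Multiset RTree),
    S = U ::ₘ RTree.node (cs ++ [c]) ::ₘ S₀ ∧
      ((∃ a, cs = [a] ∧ S' = a ::ₘ c ::ₘ S₀) ∨
        (2 ≤ cs.length ∧ S' = RTree.node cs ::ₘ c ::ₘ S₀))

/-- `RStealSeq n S` means there exists a sequence of `n` steal steps starting from `S`. -/
def RStealSeq : ℕ → Multiset RTree → Prop
  | 0, _ => True
  | n + 1, S => ∃ S', RStealStep S S' ∧ RStealSeq n S'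

/-- The maximum length of a sequence of steal steps starting from `S`. -/
noncomputable def stealsR (S : Multiset RTree) : ℕ :=
  sSup {n | RStealSeq n S}

/-- The `n`-th potential of a rooted computation tree `T`. -/
noncomputable def PhiR (T : RTree) (n : ℕ) : ℕ :=
  stealsR (T ::ₘ Multiset.replicate n (RTree.node []))

mutual
/-- The left-child right-sibling binary encoding of a rooted computation tree. -/
def LCRS : RTree → BTree
  | RTree.node [] => BTree.triv
  | RTree.node (c :: cs) => LCRSAux (LCRS c) cs

/-- `LCRSAux b cs` folds the encodings of the remaining children `cs` onto `b` from the left,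
so that `LCRS (node [c₁, …, c_m]) = node (LCRS (node [c₁, …, c_{m−1}]), LCRS c_m)` for `m ≥ 3`
and `LCRS (node [c₁, c₂]) = node (LCRS c₁, LCRS c₂)`. -/
def LCRSAux : BTree → List RTree → BTree
  | b, [] => b
  | b, c :: cs => LCRSAux (BTree.node b (LCRS c)) cs
end

/-! `LCRS` sends the rooted steal that takes the last child `c` of `node (cs ++ [c])` to the
binary steal that splits `node (LCRS (node cs)) (LCRS c)`, and on trees without unary nodes every
binary steal arises in this way. So `LCRS` matches the steal sequences of a multiset of rooted
computation trees with those of its encoding, and the maximal lengths agree. -/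

theorem Multiset.exists_eq_cons_of_map_eq_cons {α β : Type*} {f : α → β} {s : Multiset α}
    {b : β} {t : Multiset β} (h : s.map f = b ::ₘ t) :
    ∃ a s', s = a ::ₘ s' ∧ f a = b ∧ s'.map f = t := by
  classical
  obtain ⟨a, ha, rfl, rfl⟩ := (Multiset.map_eq_cons f s t b).2 h
  exact ⟨a, s.erase a, (Multiset.cons_erase ha).symm, rfl, rfl⟩

namespace RTree

theorem valid_node_iff {cs : List RTree} :
    (node cs).Valid ↔ cs.length ≠ 1 ∧ ∀ c ∈ cs, c.Valid :=
  ⟨fun ⟨_, hlen, hc⟩ => ⟨hlen, hc⟩, fun ⟨hlen, hc⟩ => .mk cs hlen hc⟩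

theorem valid_node_nil : (node []).Valid :=
  valid_node_iff.2 ⟨by simp, by simp⟩

/-- The tree left behind by stealing the last child of `node (cs ++ [c])`. -/
def remainder : List RTree → RTree
  | [a] => a
  | cs => node cs

theorem Valid.remainder {cs : List RTree} {c : RTree} (h : (node (cs ++ [c])).Valid) :
    (RTree.remainder cs).Valid := by
  rw [valid_node_iff] at h
  match cs with
  | [] => exact valid_node_nil
  | [a] => exact h.2 a (by simp)
  | a :: b :: rest =>
    exact valid_node_iff.2 ⟨by simp, fun x hx => h.2 x (List.mem_append_left _ hx)⟩

end RTree

open RTree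

theorem rStealStep_iff {S S' : Multiset RTree} :
    RStealStep S S' ↔ ∃ (U c : RTree) (cs : List RTree) (S₀ : Multiset RTree),
      cs ≠ [] ∧ S = U ::ₘ node (cs ++ [c]) ::ₘ S₀ ∧ S' = remainder cs ::ₘ c ::ₘ S₀ := by
  constructor
  · rintro ⟨U, c, cs, S₀, rfl, ⟨a, rfl, rfl⟩ | ⟨hlen, rfl⟩⟩
    · exact ⟨U, c, [a], S₀, by simp, rfl, rfl⟩
    · match cs, hlen with
      | a :: b :: rest, _ => exact ⟨U, c, a :: b :: rest, S₀, by simp, rfl, rfl⟩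
  · rintro ⟨U, c, cs, S₀, hcs, rfl, rfl⟩
    match cs, hcs with
    | [a], _ => exact ⟨U, c, [a], S₀, rfl, .inl ⟨a, rfl, rfl⟩⟩
    | a :: b :: rest, _ => exact ⟨U, c, a :: b :: rest, S₀, rfl, .inr ⟨by simp, rfl⟩⟩

theorem LCRSAux_concat (b : BTree) (cs : List RTree) (c : RTree) :
    LCRSAux b (cs ++ [c]) = .node (LCRSAux b cs) (LCRS c) := by
  induction cs generalizing b with
  | nil => simp [LCRSAux]
  | cons a as ih => simp [LCRSAux, ih]

theorem LCRS_node_concat {cs : List RTree} (hcs : cs ≠ []) (c : RTree) :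
    LCRS (node (cs ++ [c])) = .node (LCRS (node cs)) (LCRS c) := by
  obtain ⟨a, as, rfl⟩ := List.exists_cons_of_ne_nil hcs
  simp [LCRS, LCRSAux_concat]

theorem LCRS_remainder (cs : List RTree) : LCRS (remainder cs) = LCRS (node cs) := by
  match cs with
  | [] | a :: b :: rest => rfl
  | [a] => simp [remainder, LCRS, LCRSAux]

theorem eq_node_concat_of_LCRS_eq_node {T : RTree} (hT : T.Valid) {l r : BTree}
    (h : LCRS T = .node l r) :
    ∃ cs c, cs ≠ [] ∧ T = node (cs ++ [c]) ∧ LCRS (node cs) = l ∧ LCRS c = r := by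
  obtain ⟨ds⟩ := T
  obtain rfl | ⟨cs, c, rfl⟩ := List.eq_nil_or_concat' ds
  · simp [LCRS] at h
  have hcs : cs ≠ [] := by
    rintro rfl
    exact (valid_node_iff.1 hT).1 rfl
  rw [LCRS_node_concat hcs, BTree.node.injEq] at h
  exact ⟨cs, c, hcs, rfl, h⟩

section Steps

variable {S S' : Multiset RTree}

theorem RStealStep.valid (hS : ∀ T ∈ S, T.Valid) (h : RStealStep S S') :
    ∀ T ∈ S', T.Valid := by
  obtain ⟨U, c, cs, S₀, -, rfl, rfl⟩ := rStealStep_iff.1 h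
  have hT : (node (cs ++ [c])).Valid := hS _ (by simp)
  simp only [Multiset.mem_cons]
  rintro T (rfl | rfl | hT₀)
  · exact hT.remainder
  · exact (valid_node_iff.1 hT).2 T (by simp)
  · exact hS T (by simp [hT₀])

theorem RStealStep.map_LCRS (h : RStealStep S S') :
    StealStep (S.map LCRS) (S'.map LCRS) := by
  obtain ⟨U, c, cs, S₀, hcs, rfl, rfl⟩ := rStealStep_iff.1 h
  exact ⟨LCRS U, LCRS (node cs), LCRS c, S₀.map LCRS,
    by simp [LCRS_node_concat hcs], by simp [LCRS_remainder]⟩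

theorem StealStep.exists_rStealStep (hS : ∀ T ∈ S, T.Valid) {B : Multiset BTree}
    (h : StealStep (S.map LCRS) B) : ∃ S', RStealStep S S' ∧ S'.map LCRS = B := by
  obtain ⟨U, l, r, B₀, hSB, rfl⟩ := h
  obtain ⟨u, S₁, rfl, -, hS₁⟩ := Multiset.exists_eq_cons_of_map_eq_cons hSB
  obtain ⟨t, S₀, rfl, ht, rfl⟩ := Multiset.exists_eq_cons_of_map_eq_cons hS₁
  obtain ⟨cs, c, hcs, rfl, rfl, rfl⟩ := eq_node_concat_of_LCRS_eq_node (hS t (by simp)) ht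
  exact ⟨remainder cs ::ₘ c ::ₘ S₀, rStealStep_iff.2 ⟨u, c, cs, S₀, hcs, rfl, rfl⟩,
    by simp [LCRS_remainder]⟩

theorem rStealSeq_iff_stealSeq_map_LCRS (n : ℕ) (hS : ∀ T ∈ S, T.Valid) :
    RStealSeq n S ↔ StealSeq n (S.map LCRS) := by
  induction n generalizing S with
  | zero => simp [RStealSeq, StealSeq]
  | succ n ih =>
    constructor
    · rintro ⟨S', hstep, hseq⟩
      exact ⟨S'.map LCRS, hstep.map_LCRS, (ih (hstep.valid hS)).1 hseq⟩
    · rintro ⟨B, hstep, hseq⟩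
      obtain ⟨S', hstep', rfl⟩ := hstep.exists_rStealStep hS
      exact ⟨S', hstep', (ih (hstep'.valid hS)).2 hseq⟩

theorem stealsR_eq_steals_map_LCRS (hS : ∀ T ∈ S, T.Valid) :
    stealsR S = steals (S.map LCRS) := by
  unfold stealsR steals
  congr 1
  ext n
  exact rStealSeq_iff_stealSeq_map_LCRS n hS

end Steps

theorem potential_eq_potential_LCRS (T : RTree) (hT : T.Valid) (n : ℕ) :
    PhiR T n = Phi (LCRS T) n := by
  have hvalid : ∀ X ∈ T ::ₘ Multiset.replicate n (node []), X.Valid := by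
    simp only [Multiset.mem_cons, Multiset.mem_replicate]
    rintro X (rfl | ⟨-, rfl⟩)
    · exact hT
    · exact valid_node_nil
  rw [PhiR, Phi, stealsR_eq_steals_map_LCRS hvalid, Multiset.map_cons, Multiset.map_replicate]
  rfl
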